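/- Let α > -1/2 and a ≥ 1. There exists a constant C, depending only on α (in particular, independent of j), such that for every integer j ≥ 1, every ξ ∈ (0,1) and all x, y > 0 with x ≠ y one has G_{α+aj,t(ξ)}(x,y) ≤ C · (Γ(aj)/Γ(α+aj+1/2)) · exp(−(x−y)²/(8ξ)) · ((1−ξ²)/ξ)^{α+1} · |x²−y²|^{−(2α+1)} · (xy)^{−aj}. -/

import Mathlib

open MeasureTheory
open scoped ENNReal NNReal

/-- One-dimensional Laguerre heat kernel of Hermite type `G^H_{α,t}(x,y)`. -/
noncomputable def lagHeatH (α t x y : ℝ) : ℝ :=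
  (x * y) ^ (α + 1/2) * Real.sinh (2 * t) ^ (-1 - α) *
    ∫ s in (-1:ℝ)..1,
      Real.exp (-(1/2) * (Real.cosh (2 * t) / Real.sinh (2 * t)) * (x ^ 2 + y ^ 2)
          - x * y * s / Real.sinh (2 * t)) *
        ((1 - s ^ 2) ^ (α - 1/2) / (2 ^ α * Real.sqrt Real.pi * Real.Gamma (α + 1/2)))

/-- Laguerre heat kernel of convolution type `G_{α,t}(x,y) = (xy)^{−α−1/2} G^H_{α,t}(x,y)`. -/
noncomputable def lagHeatC (α t x y : ℝ) : ℝ :=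
  (x * y) ^ (-α - 1/2) * lagHeatH α t x y

/-- Meda's change of variable `t(ξ) = (1/2) log((1+ξ)/(1−ξ))`, `ξ ∈ (0,1)`. -/
noncomputable def meda (ξ : ℝ) : ℝ := (1/2) * Real.log ((1 + ξ) / (1 - ξ))

/-!
Write `b = aj`. Under Meda's substitution `sinh 2t = 2ξ/(1-ξ²)`, and the exponent of the kernel
splits as `-(x-y)²/(4ξ) - ξ(x+y)²/4 - T(1+s)` with `T = xy(1-ξ²)/(2ξ)`. Bounding
`(1-s²)^(α+b-1/2)` by a power of `2` times `(1+s)^(b-1)` turns the `s`-integral into an incomplete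
Gamma integral, at most `Γ(b) T^(-b)`; this yields the factors `Γ(b)` and `(xy)^(-b)`. One copy of
`exp(-(x-y)²/(8ξ))` is kept, and the rest of the Gaussian factor, `exp(-(x-y)²/(8ξ) - ξ(x+y)²/4)`,
is traded for `|x²-y²|^(-(2α+1))` via `u^p e^(-u) ≤ p^p e^(-p)` with `p = α + 1/2`.
-/

open Real Set

lemma exp_two_meda {ξ : ℝ} (hξ : ξ ∈ Ioo (0:ℝ) 1) : exp (2 * meda ξ) = (1 + ξ) / (1 - ξ) := by
  rw [meda, ← mul_assoc, show (2:ℝ) * (1/2) = 1 by norm_num, one_mul,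
    exp_log (div_pos (by linarith [hξ.1]) (by linarith [hξ.2]))]

lemma sinh_two_meda {ξ : ℝ} (hξ : ξ ∈ Ioo (0:ℝ) 1) :
    sinh (2 * meda ξ) = 2 * ξ / (1 - ξ ^ 2) := by
  have h₁ : 1 - ξ ≠ 0 := by linarith [hξ.2]
  have h₂ : 1 + ξ ≠ 0 := by linarith [hξ.1]
  have h₃ : 1 - ξ ^ 2 ≠ 0 := by rw [show 1 - ξ ^ 2 = (1 - ξ) * (1 + ξ) by ring]; positivity
  rw [sinh_eq, exp_neg, exp_two_meda hξ]
  field_simp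
  ring

lemma cosh_two_meda {ξ : ℝ} (hξ : ξ ∈ Ioo (0:ℝ) 1) :
    cosh (2 * meda ξ) = (1 + ξ ^ 2) / (1 - ξ ^ 2) := by
  have h₁ : 1 - ξ ≠ 0 := by linarith [hξ.2]
  have h₂ : 1 + ξ ≠ 0 := by linarith [hξ.1]
  have h₃ : 1 - ξ ^ 2 ≠ 0 := by rw [show 1 - ξ ^ 2 = (1 - ξ) * (1 + ξ) by ring]; positivity
  rw [cosh_eq, exp_neg, exp_two_meda hξ]
  field_simp
  ring

lemma rpow_mul_exp_neg_le {p u : ℝ} (hp : 0 < p) (hu : 0 ≤ u) :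
    u ^ p * exp (-u) ≤ p ^ p * exp (-p) := by
  have key : u / p ≤ exp (u / p - 1) := by linarith [add_one_le_exp (u / p - 1)]
  calc u ^ p * exp (-u) = p ^ p * (u / p) ^ p * exp (-u) := by
        rw [div_rpow hu hp.le, mul_div_cancel₀ _ (rpow_pos_of_pos hp p).ne']
    _ ≤ p ^ p * exp (u / p - 1) ^ p * exp (-u) := by gcongr
    _ = p ^ p * exp (-p) := by
        rw [← exp_mul, mul_assoc, ← exp_add]
        field_simp
        ring_nf

lemma exp_neg_add_le {p u v : ℝ} (hp : 0 < p) (hu : 0 < u) (hv : 0 < v) :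
    exp (-(u + v)) ≤ (p ^ p * exp (-p)) ^ 2 * (u * v) ^ (-p) := by
  have huv : 0 < (u * v) ^ p := by positivity
  rw [rpow_neg (by positivity), ← div_eq_mul_inv, le_div_iff₀ huv, mul_rpow hu.le hv.le,
    neg_add, exp_add]
  calc exp (-u) * exp (-v) * (u ^ p * v ^ p)
      = (u ^ p * exp (-u)) * (v ^ p * exp (-v)) := by ring
    _ ≤ (p ^ p * exp (-p)) * (p ^ p * exp (-p)) :=
        mul_le_mul (rpow_mul_exp_neg_le hp hu.le) (rpow_mul_exp_neg_le hp hv.le)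
          (by positivity) (by positivity)
    _ = (p ^ p * exp (-p)) ^ 2 := by ring

lemma intervalIntegral_rpow_mul_exp_neg_mul_le {a r L : ℝ} (ha : 0 < a) (hr : 0 < r)
    (hL : 0 ≤ L) : ∫ t in (0:ℝ)..L, t ^ (a - 1) * exp (-(r * t)) ≤ (1 / r) ^ a * Gamma a := by
  rw [← integral_rpow_mul_exp_neg_mul_Ioi ha hr, intervalIntegral.integral_of_le hL]
  have hint : IntegrableOn (fun t : ℝ => t ^ (a - 1) * exp (-(r * t))) (Ioi 0) := by
    refine (integrableOn_rpow_mul_exp_neg_mul_rpow (s := a - 1) (by linarith) one_pos hr).congr_fun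
      (fun t _ => ?_) measurableSet_Ioi
    simp [rpow_one]
  refine setIntegral_mono_set hint ?_ Ioc_subset_Ioi_self.eventuallyLE
  filter_upwards [ae_restrict_mem measurableSet_Ioi] with t ht
  exact mul_nonneg (rpow_nonneg (le_of_lt ht) _) (exp_nonneg _)

lemma one_sub_sq_rpow_le {s p c : ℝ} (hs : s ∈ Icc (-1:ℝ) 1) (hp : 0 ≤ p) (hc : 0 ≤ c) :
    (1 - s ^ 2) ^ (p + c) ≤ 2 ^ (2 * p + c) * (1 + s) ^ c := by
  obtain ⟨hs₁, hs₂⟩ := hs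
  have h₁ : 0 ≤ 1 + s := by linarith
  have h₂ : 0 ≤ 1 - s := by linarith
  calc (1 - s ^ 2) ^ (p + c) = (1 + s) ^ p * (1 - s) ^ (p + c) * (1 + s) ^ c := by
        rw [show 1 - s ^ 2 = (1 + s) * (1 - s) by ring, mul_rpow h₁ h₂,
          rpow_add_of_nonneg h₁ hp hc]
        ring
    _ ≤ 2 ^ p * 2 ^ (p + c) * (1 + s) ^ c := by
        gcongr <;> linarith
    _ = 2 ^ (2 * p + c) * (1 + s) ^ c := by
        rw [← rpow_add two_pos]
        ring_nf

lemma integral_exp_mul_one_sub_sq_rpow_le {A T p b : ℝ} (hT : 0 < T) (hp : 0 ≤ p) (hb : 1 ≤ b) :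
    ∫ s in (-1:ℝ)..1, exp (A - T * (1 + s)) * (1 - s ^ 2) ^ (p + (b - 1)) ≤
      exp A * 2 ^ (2 * p + (b - 1)) * ((1 / T) ^ b * Gamma b) := by
  have hc : 0 ≤ b - 1 := by linarith
  have hmono : ∫ s in (-1:ℝ)..1, exp (A - T * (1 + s)) * (1 - s ^ 2) ^ (p + (b - 1)) ≤
      ∫ s in (-1:ℝ)..1,
        exp A * 2 ^ (2 * p + (b - 1)) * ((1 + s) ^ (b - 1) * exp (-(T * (1 + s)))) := by
    refine intervalIntegral.integral_mono_on (by norm_num) (Continuous.intervalIntegrable ?_ _ _)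
      (Continuous.intervalIntegrable ?_ _ _) fun s hs => ?_
    · exact (by fun_prop : Continuous fun s : ℝ => exp (A - T * (1 + s))).mul
        ((continuous_const.sub (continuous_pow 2)).rpow_const fun _ => Or.inr (by positivity))
    · exact continuous_const.mul (((continuous_const.add continuous_id).rpow_const
        fun _ => Or.inr hc).mul (by fun_prop))
    · calc exp (A - T * (1 + s)) * (1 - s ^ 2) ^ (p + (b - 1))
          ≤ exp (A - T * (1 + s)) * (2 ^ (2 * p + (b - 1)) * (1 + s) ^ (b - 1)) :=
            mul_le_mul_of_nonneg_left (one_sub_sq_rpow_le hs hp hc) (exp_nonneg _)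
        _ = _ := by rw [sub_eq_add_neg, exp_add]; ring
  refine hmono.trans ?_
  rw [intervalIntegral.integral_const_mul,
    intervalIntegral.integral_comp_add_left (fun t => t ^ (b - 1) * exp (-(T * t)))]
  norm_num only
  gcongr
  exact intervalIntegral_rpow_mul_exp_neg_mul_le (by linarith) hT zero_le_two

lemma lagHeatC_eq_integral (β t : ℝ) {x y : ℝ} (hxy : 0 < x * y) :
    lagHeatC β t x y = sinh (2 * t) ^ (-1 - β) *
      (∫ s in (-1:ℝ)..1, exp (-(1/2) * (cosh (2 * t) / sinh (2 * t)) * (x ^ 2 + y ^ 2)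
            - x * y * s / sinh (2 * t)) * (1 - s ^ 2) ^ (β - 1/2)) /
        (2 ^ β * sqrt π * Gamma (β + 1/2)) := by
  have hcancel : (x * y) ^ (-β - 1/2) * (x * y) ^ (β + 1/2) = 1 := by
    rw [← rpow_add hxy]; norm_num
  rw [lagHeatC, lagHeatH, mul_div_assoc, ← intervalIntegral.integral_div]
  simp only [mul_div_assoc]
  rw [← mul_assoc, ← mul_assoc, hcancel, one_mul]

lemma sq_div_rpow_neg (d : ℝ) {c : ℝ} (hc : 0 ≤ c) (p : ℝ) :
    (d ^ 2 / c) ^ (-p) = c ^ p * |d| ^ (-(2 * p)) := by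
  rw [← sq_abs, ← rpow_natCast, div_rpow (by positivity) hc, ← rpow_mul (abs_nonneg d),
    rpow_neg hc, div_inv_eq_mul]
  push_cast
  ring_nf

lemma integral_heat_meda_le {ξ x y p b : ℝ} (hξ : ξ ∈ Ioo (0:ℝ) 1) (hx : 0 < x) (hy : 0 < y)
    (hxy : x ≠ y) (hp : 0 < p) (hb : 1 ≤ b) :
    ∫ s in (-1:ℝ)..1, exp (-(1/2) * (cosh (2 * meda ξ) / sinh (2 * meda ξ)) * (x ^ 2 + y ^ 2)
        - x * y * s / sinh (2 * meda ξ)) * (1 - s ^ 2) ^ (p + (b - 1)) ≤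
      exp (-(x - y) ^ 2 / (8 * ξ)) *
        ((p ^ p * exp (-p)) ^ 2 * (32 ^ p * |x ^ 2 - y ^ 2| ^ (-(2 * p)))) *
        2 ^ (2 * p + (b - 1)) * ((sinh (2 * meda ξ) / (x * y)) ^ b * Gamma b) := by
  rw [sinh_two_meda hξ, cosh_two_meda hξ]
  obtain ⟨hξ₀, hξ₁⟩ := hξ
  have hξ₂ : 0 < 1 - ξ ^ 2 := by nlinarith
  set sh := 2 * ξ / (1 - ξ ^ 2) with hsh_def
  set u := (x - y) ^ 2 / (8 * ξ) with hu_def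
  set v := ξ * (x + y) ^ 2 / 4 with hv_def
  have hu : 0 < u := by have := sub_ne_zero.mpr hxy; positivity
  have hv : 0 < v := by positivity
  have hexponent : ∀ s : ℝ, -(1/2) * ((1 + ξ ^ 2) / (1 - ξ ^ 2) / sh) * (x ^ 2 + y ^ 2)
      - x * y * s / sh = -(u + (u + v)) - x * y / sh * (1 + s) := fun s => by
    rw [hsh_def, hu_def, hv_def]
    field_simp
    ring
  have huv : u * v = (x ^ 2 - y ^ 2) ^ 2 / 32 := by
    rw [hu_def, hv_def]
    field_simp
    ring
  simp only [hexponent]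
  refine (integral_exp_mul_one_sub_sq_rpow_le (by positivity) hp.le hb).trans ?_
  rw [one_div_div, ← sq_div_rpow_neg _ (by norm_num), ← huv, neg_div, ← hu_def]
  gcongr
  rw [neg_add, exp_add]
  gcongr
  exact exp_neg_add_le hp hu hv

lemma sinh_two_meda_pos {ξ : ℝ} (hξ : ξ ∈ Ioo (0:ℝ) 1) : 0 < sinh (2 * meda ξ) := by
  rw [sinh_two_meda hξ]
  exact div_pos (by linarith [hξ.1]) (by nlinarith [hξ.1, hξ.2])

lemma sinh_two_meda_rpow_mul {ξ Z : ℝ} (hξ : ξ ∈ Ioo (0:ℝ) 1) (hZ : 0 < Z) (α b : ℝ) :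
    sinh (2 * meda ξ) ^ (-1 - (α + b)) * (sinh (2 * meda ξ) / Z) ^ b =
      ((1 - ξ ^ 2) / ξ) ^ (α + 1) * Z ^ (-b) / 2 ^ (α + 1) := by
  have hξ₂ : 0 < 1 - ξ ^ 2 := by nlinarith [hξ.1, hξ.2]
  have hsh := sinh_two_meda_pos hξ
  calc _ = sinh (2 * meda ξ) ^ (-1 - (α + b) + b) * Z ^ (-b) := by
        rw [div_rpow hsh.le hZ.le, rpow_neg hZ.le, rpow_add hsh]
        ring
    _ = ((1 - ξ ^ 2) / ξ / 2) ^ (α + 1) * Z ^ (-b) := by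
        rw [show -1 - (α + b) + b = -(α + 1) by ring, rpow_neg hsh.le, ← inv_rpow hsh.le,
          sinh_two_meda hξ, inv_div, div_div, mul_comm ξ]
    _ = _ := by
        rw [div_rpow (div_pos hξ₂ hξ.1).le zero_le_two]
        ring

theorem lagHeatC_meda_le {α b ξ x y : ℝ} (hα : -(1/2) < α) (hb : 1 ≤ b) (hξ : ξ ∈ Ioo (0:ℝ) 1)
    (hx : 0 < x) (hy : 0 < y) (hxy : x ≠ y) :
    lagHeatC (α + b) (meda ξ) x y ≤
      ((α + 1/2) ^ (α + 1/2) * exp (-(α + 1/2))) ^ 2 * 32 ^ (α + 1/2) / (2 * sqrt π) *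
        (Gamma b / Gamma (α + b + 1/2)) * exp (-(x - y) ^ 2 / (8 * ξ)) *
        ((1 - ξ ^ 2) / ξ) ^ (α + 1) * |x ^ 2 - y ^ 2| ^ (-(2 * α + 1)) * (x * y) ^ (-b) := by
  have hp : 0 < α + 1/2 := by linarith
  have hΓ := Gamma_pos_of_pos (show 0 < α + b + 1/2 by linarith)
  have htwo_pow : (2:ℝ) ^ (2 * (α + 1/2) + (b - 1)) = 2 ^ (α + b) * 2 ^ (α + 1) / 2 := by
    rw [← rpow_add two_pos, ← rpow_sub_one two_ne_zero]
    ring_nf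
  rw [lagHeatC_eq_integral _ _ (mul_pos hx hy), show α + b - 1/2 = α + 1/2 + (b - 1) by ring,
    show -(2 * α + 1) = -(2 * (α + 1/2)) by ring]
  calc _ ≤ sinh (2 * meda ξ) ^ (-1 - (α + b)) *
        (exp (-(x - y) ^ 2 / (8 * ξ)) * (((α + 1/2) ^ (α + 1/2) * exp (-(α + 1/2))) ^ 2 *
          (32 ^ (α + 1/2) * |x ^ 2 - y ^ 2| ^ (-(2 * (α + 1/2))))) *
          2 ^ (2 * (α + 1/2) + (b - 1)) * ((sinh (2 * meda ξ) / (x * y)) ^ b * Gamma b)) /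
        (2 ^ (α + b) * sqrt π * Gamma (α + b + 1/2)) := by
        refine div_le_div_of_nonneg_right (mul_le_mul_of_nonneg_left ?_
          (rpow_nonneg (sinh_two_meda_pos hξ).le _)) (by positivity)
        exact integral_heat_meda_le hξ hx hy hxy hp hb
    _ = ((α + 1/2) ^ (α + 1/2) * exp (-(α + 1/2))) ^ 2 * 32 ^ (α + 1/2) *
          |x ^ 2 - y ^ 2| ^ (-(2 * (α + 1/2))) * exp (-(x - y) ^ 2 / (8 * ξ)) * Gamma b /
          (sqrt π * Gamma (α + b + 1/2)) * 2 ^ (2 * (α + 1/2) + (b - 1)) / 2 ^ (α + b) *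
          (sinh (2 * meda ξ) ^ (-1 - (α + b)) * (sinh (2 * meda ξ) / (x * y)) ^ b) := by ring
    _ = _ := by
        rw [sinh_two_meda_rpow_mul hξ (mul_pos hx hy), htwo_pow]
        field_simp

/-- for `α > −1/2`, `a ≥ 1` there is `C = C(α)` (independent of `j`) with
`G_{α+aj,t(ξ)}(x,y) ≤ C (Γ(aj)/Γ(α+aj+1/2)) exp(−(x−y)²/(8ξ)) ((1−ξ²)/ξ)^{α+1}
|x²−y²|^{−(2α+1)} (xy)^{−aj}` for all `j ≥ 1`, `ξ ∈ (0,1)` and `x, y > 0` with `x ≠ y`. -/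
theorem stmt17 (α a : ℝ) (hα : -(1/2) < α) (ha : 1 ≤ a) :
    ∃ C : ℝ, 0 < C ∧ ∀ j : ℕ, 1 ≤ j → ∀ ξ ∈ Set.Ioo (0:ℝ) 1, ∀ x y : ℝ,
      0 < x → 0 < y → x ≠ y →
      lagHeatC (α + a * (j:ℝ)) (meda ξ) x y ≤
        C * (Real.Gamma (a * (j:ℝ)) / Real.Gamma (α + a * (j:ℝ) + 1/2)) *
          Real.exp (-(x - y) ^ 2 / (8 * ξ)) * ((1 - ξ ^ 2) / ξ) ^ (α + 1) *
          |x ^ 2 - y ^ 2| ^ (-(2 * α + 1)) * (x * y) ^ (-(a * (j:ℝ))) := by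
  have hD : 0 < (α + 1/2) ^ (α + 1/2) * exp (-(α + 1/2)) :=
    mul_pos (rpow_pos_of_pos (by linarith) _) (exp_pos _)
  refine ⟨_, by positivity, fun j hj ξ hξ x y hx hy hxy => lagHeatC_meda_le hα ?_ hξ hx hy hxy⟩
  exact one_le_mul_of_one_le_of_one_le ha (Nat.one_le_cast.mpr hj)
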